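/- There exists a logic program with preferences (P,<) having an answer set S that is preferred under the fragment-based semantics G but not under GNO (i.e., G is not included in GNO). -/

import Mathlib

/-- A literal over atoms `A`: `(true, a)` is the atom `a`, `(false, a)` is `¬ a`. -/
abbrev Lit (A : Type) := Bool × A

/-- A rule with head, positive body and negative body. -/
structure Rule (A : Type) where
  head : Lit A
  pos : Set (Lit A)
  neg : Set (Lit A)

variable {A : Type}

/-- Heads of a set of rules. -/
def headSet (R : Set (Rule A)) : Set (Lit A) := Rule.head '' R

/-- `R ⊆ P` positively satisfies `P`. -/
def PosSat (P R : Set (Rule A)) : Prop :=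
  R ⊆ P ∧ ∀ r ∈ P, r.pos ⊆ headSet R → r ∈ R

/-- The minimal set of rules positively satisfying `P`. -/
def MP (P : Set (Rule A)) : Set (Rule A) := ⋂₀ {R | PosSat P R}

/-- A set of rules defeats a rule. -/
def defeatsRule (R : Set (Rule A)) (r : Rule A) : Prop :=
  (headSet R ∩ r.neg).Nonempty

/-- A set of rules defeats a set of rules. -/
def defeatsSet (R₁ R₂ : Set (Rule A)) : Prop := ∃ r ∈ R₂, defeatsRule R₁ r

/-- The reduct `P^R` removes each rule defeated by `R`. -/
def reduct (P R : Set (Rule A)) : Set (Rule A) := {r ∈ P | ¬ defeatsRule R r}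

/-- `R ⊆ P` is a generating set of `P` iff `R = MP (P^R)`. -/
def GenSet (P R : Set (Rule A)) : Prop := R ⊆ P ∧ R = MP (reduct P R)

/-- A set of literals is consistent iff it contains no complementary pair. -/
def Consistent (S : Set (Lit A)) : Prop :=
  ∀ a : A, ¬ (((true, a) ∈ S) ∧ ((false, a) ∈ S))

/-- Answer sets via generating sets. -/
def AnswerSet (P : Set (Rule A)) (S : Set (Lit A)) : Prop :=
  Consistent S ∧ ∃ R, GenSet P R ∧ headSet R = S

/-- `Γ_S(P)`: rules whose positive body is in `S` and negative body disjoint from `S`. -/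
def Gamma (S : Set (Lit A)) (P : Set (Rule A)) : Set (Rule A) :=
  {r ∈ P | r.pos ⊆ S ∧ r.neg ∩ S = ∅}

/-- Fragments of a program. -/
def Frag (P : Set (Rule A)) : Set (Set (Rule A)) := {R | R ⊆ P ∧ MP R = R}

/-- Fragment reduct: remove fragments defeated by a member of `E`. -/
def fragReduct (P : Set (Rule A)) (E : Set (Set (Rule A))) : Set (Set (Rule A)) :=
  {X ∈ Frag P | ¬ ∃ Y ∈ E, defeatsSet Y X}

/-- Stable fragment sets. -/
def StableFragSet (P : Set (Rule A)) (E : Set (Set (Rule A))) : Prop :=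
  E ⊆ Frag P ∧ fragReduct P E = E

/-- Mutually defeating (conflicting) sets of rules. -/
def Conflicting (X Y : Set (Rule A)) : Prop := defeatsSet X Y ∧ defeatsSet Y X

/-- `X` overrides `Y` w.r.t. the preference relation `lt`. -/
def Overrides (lt : Rule A → Rule A → Prop) (X Y : Set (Rule A)) : Prop :=
  Conflicting X Y ∧
    ∀ r₁ ∈ X, defeatsRule Y r₁ → ∃ r₂ ∈ Y, defeatsRule X r₂ ∧ lt r₂ r₁

/-- Preferred fragment reduct (semantics G). -/
def prefFragReduct (lt : Rule A → Rule A → Prop) (P : Set (Rule A))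
    (E : Set (Set (Rule A))) : Set (Set (Rule A)) :=
  {X ∈ Frag P | ¬ ∃ Y ∈ E, defeatsSet Y X ∧ ¬ Overrides lt X Y}

/-- Preferred stable fragment sets (semantics G). -/
def PrefStableFragSet (lt : Rule A → Rule A → Prop) (P : Set (Rule A))
    (E : Set (Set (Rule A))) : Prop :=
  E ⊆ Frag P ∧ prefFragReduct lt P E = E

/-- Preferred answer sets under the fragment-based semantics G. -/
def GPrefAnswerSet (lt : Rule A → Rule A → Prop) (P : Set (Rule A))
    (S : Set (Lit A)) : Prop :=
  Consistent S ∧ ∃ E, PrefStableFragSet lt P E ∧ headSet (⋃₀ E) = S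

/-- `T(r,R)` for semantics GNO. -/
def Trules (lt : Rule A → Rule A → Prop) (r : Rule A) (R : Set (Rule A)) :
    Set (Rule A) :=
  MP {p ∈ R | ¬ lt p r}

/-- GNO reduct: remove rules `r` with `body⁻(r) ∩ head(T(r,R)) ≠ ∅`. -/
def gnoReduct (lt : Rule A → Rule A → Prop) (P R : Set (Rule A)) : Set (Rule A) :=
  {r ∈ P | ¬ (r.neg ∩ headSet (Trules lt r R)).Nonempty}

/-- GNO-preferred generating sets. -/
def GNOPrefGen (lt : Rule A → Rule A → Prop) (P R : Set (Rule A)) : Prop :=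
  GenSet P R ∧ R = MP (gnoReduct lt P R)

/-- GNO-preferred answer sets. -/
def GNOPrefAnswerSet (lt : Rule A → Rule A → Prop) (P : Set (Rule A))
    (S : Set (Lit A)) : Prop :=
  Consistent S ∧ ∃ R, GNOPrefGen lt P R ∧ headSet R = S

/-- A rule defeats a rule. -/
def defeats (r₁ r₂ : Rule A) : Prop := r₁.head ∈ r₂.neg

/-- `r₁` directly overrides `r₂` w.r.t. `lt`. -/
def DirOverrides (lt : Rule A → Rule A → Prop) (r₁ r₂ : Rule A) : Prop :=
  (defeats r₁ r₂ ∧ defeats r₂ r₁) ∧ lt r₂ r₁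

/-- D-reduct for the direct-conflict semantics. -/
def dReduct (lt : Rule A → Rule A → Prop) (P R : Set (Rule A)) : Set (Rule A) :=
  {r₁ ∈ P | ¬ ∃ r₂ ∈ R, defeats r₂ r₁ ∧ ¬ DirOverrides lt r₁ r₂}

/-- D-preferred generating sets. -/
def DPrefGen (lt : Rule A → Rule A → Prop) (P R : Set (Rule A)) : Prop :=
  R = MP (dReduct lt P R)

/-- D-preferred answer sets. -/
def DPrefAnswerSet (lt : Rule A → Rule A → Prop) (P : Set (Rule A))
    (S : Set (Lit A)) : Prop :=
  Consistent S ∧ ∃ R, DPrefGen lt P R ∧ headSet R = S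

/-- Stratified programs. -/
def Stratified (P : Set (Rule A)) : Prop :=
  ∃ lam : Lit A → ℕ, ∀ r ∈ P,
    (∀ l ∈ r.pos, lam l ≤ lam r.head) ∧ (∀ l ∈ r.neg, lam l < lam r.head)

/-!
Take `r₁ : a ← not b` and `r₂ : b ←` with `r₂ < r₁`. The rule `r₂` cannot be defeated and it
defeats `r₁`, so `{b}` is the unique answer set. Under G, a fragment containing `r₁` is defeated by
`{r₂}` and can only survive by overriding it, which requires mutual defeat; hence the preference is
never consulted and the fragments of `{r₂}` form a preferred stable fragment set. Under GNO the
preference is consulted directly: `r₁` only has to face rules not below it, and there are none,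
so `r₁` survives the GNO reduct and ends up in every GNO-preferred generating set.
-/

theorem sUnion_powerset_eq {α : Type*} (s : Set α) : ⋃₀ (𝒫 s) = s :=
  (Set.sUnion_subset fun _ h => h).antisymm
    (Set.subset_sUnion_of_mem (Set.mem_powerset subset_rfl))

theorem MP_subset (Q : Set (Rule A)) : MP Q ⊆ Q :=
  Set.sInter_subset_of_mem ⟨subset_rfl, fun _ hr _ => hr⟩

theorem mem_MP_of_pos_eq_empty {Q : Set (Rule A)} {r : Rule A} (hr : r ∈ Q)
    (hpos : r.pos = ∅) : r ∈ MP Q :=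
  Set.mem_sInter.2 fun _ hR => hR.2 r hr (hpos ▸ Set.empty_subset _)

theorem MP_eq_self {Q : Set (Rule A)} (hpos : ∀ r ∈ Q, r.pos = ∅) : MP Q = Q :=
  (MP_subset Q).antisymm fun r hr => mem_MP_of_pos_eq_empty hr (hpos r hr)

theorem mem_Frag_iff {P X : Set (Rule A)} (hpos : ∀ r ∈ P, r.pos = ∅) :
    X ∈ Frag P ↔ X ⊆ P :=
  ⟨And.left, fun hX => ⟨hX, MP_eq_self fun r hr => hpos r (hX hr)⟩⟩

theorem not_defeatsRule_of_neg_eq_empty {R : Set (Rule A)} {r : Rule A} (h : r.neg = ∅) :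
    ¬ defeatsRule R r := by
  rintro ⟨l, -, hl⟩
  rwa [h] at hl

theorem not_defeatsSet_of_neg_eq_empty {R X : Set (Rule A)} (h : ∀ r ∈ X, r.neg = ∅) :
    ¬ defeatsSet R X :=
  fun ⟨r, hr, hd⟩ => not_defeatsRule_of_neg_eq_empty (h r hr) hd

theorem not_overrides_of_not_defeatsSet (lt : Rule A → Rule A → Prop) {X Y : Set (Rule A)}
    (h : ¬ defeatsSet X Y) : ¬ Overrides lt X Y :=
  fun hXY => h hXY.1.1

theorem consistent_singleton (l : Lit A) : Consistent ({l} : Set (Lit A)) := by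
  rintro a ⟨rfl, h⟩
  simp at h

section UndefeatedCore

variable {P Q : Set (Rule A)} (hQP : Q ⊆ P) (hneg : ∀ r ∈ Q, r.neg = ∅)
  (hdef : ∀ r ∈ P, r ∉ Q → defeatsRule Q r)
include hQP hneg hdef

theorem reduct_eq_of_undefeated : reduct P Q = Q :=
  Set.Subset.antisymm
    (fun r ⟨hrP, hnd⟩ => by_contra fun hrQ => hnd (hdef r hrP hrQ))
    (fun r hr => ⟨hQP hr, not_defeatsRule_of_neg_eq_empty (hneg r hr)⟩)

theorem genSet_of_undefeated (hpos : ∀ r ∈ P, r.pos = ∅) : GenSet P Q := by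
  refine ⟨hQP, ?_⟩
  rw [reduct_eq_of_undefeated hQP hneg hdef, MP_eq_self fun r hr => hpos r (hQP hr)]

/-- A fragment meeting `P \ Q` is defeated by `Q` without defeating it back, so it cannot
override `Q`, whatever the preference. -/
theorem prefStableFragSet_powerset_of_undefeated (hpos : ∀ r ∈ P, r.pos = ∅)
    (lt : Rule A → Rule A → Prop) : PrefStableFragSet lt P (𝒫 Q) := by
  have hQ : ∀ Y ∈ 𝒫 Q, ∀ X, ¬ defeatsSet X Y := fun Y hY _ =>
    not_defeatsSet_of_neg_eq_empty fun r hr => hneg r (hY hr)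
  refine ⟨fun X hX => (mem_Frag_iff hpos).2 (hX.trans hQP), ?_⟩
  ext X
  simp only [prefFragReduct, Set.mem_ofPred_eq, mem_Frag_iff hpos]
  constructor
  · rintro ⟨hXP, hX⟩ r hr
    by_contra hrQ
    exact hX ⟨Q, Set.mem_powerset subset_rfl, ⟨r, hr, hdef r (hXP hr) hrQ⟩,
      not_overrides_of_not_defeatsSet lt (hQ Q (Set.mem_powerset subset_rfl) X)⟩
  · intro hXQ
    exact ⟨hXQ.trans hQP, fun ⟨_, _, hd, _⟩ => hQ X hXQ _ hd⟩

end UndefeatedCore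

theorem mem_gnoReduct_of_forall_lt {lt : Rule A → Rule A → Prop} {P R : Set (Rule A)}
    {r : Rule A} (hr : r ∈ P) (hlt : ∀ p ∈ R, lt p r) : r ∈ gnoReduct lt P R := by
  refine ⟨hr, ?_⟩
  rintro ⟨-, -, p, hp, -⟩
  obtain ⟨hpR, hnlt⟩ := MP_subset _ hp
  exact hnlt (hlt p hpR)

theorem mem_of_GNOPrefGen {lt : Rule A → Rule A → Prop} {P R : Set (Rule A)} {r : Rule A}
    (hR : GNOPrefGen lt P R) (hpos : ∀ r ∈ P, r.pos = ∅) (hr : r ∈ P)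
    (hlt : ∀ p ∈ R, lt p r) : r ∈ R := by
  rw [hR.2]
  exact mem_MP_of_pos_eq_empty (mem_gnoReduct_of_forall_lt hr hlt) (hpos r hr)

namespace GNOCounterexample

/-- The atoms are `a = 0` and `b = 1`. -/
def r₁ : Rule ℕ := ⟨(true, 0), ∅, {(true, 1)}⟩

def r₂ : Rule ℕ := ⟨(true, 1), ∅, ∅⟩

def P : Set (Rule ℕ) := {r₁, r₂}

def lt (p q : Rule ℕ) : Prop := p = r₂ ∧ q = r₁

def S : Set (Lit ℕ) := {(true, 1)}

theorem P_finite : P.Finite := (Set.finite_singleton _).insert _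

theorem r₁_ne_r₂ : r₁ ≠ r₂ := fun h => by
  simpa [r₁, r₂] using congrArg Rule.head h

theorem lt_transitive : Transitive lt := by
  rintro _ _ _ ⟨rfl, rfl⟩ ⟨h, rfl⟩
  exact absurd h r₁_ne_r₂

theorem lt_asymm (p q : Rule ℕ) : lt p q → ¬ lt q p := by
  rintro ⟨rfl, rfl⟩ ⟨h, -⟩
  exact r₁_ne_r₂ h

theorem pos_eq_empty : ∀ r ∈ P, r.pos = ∅ := by
  rintro r (rfl | rfl) <;> rfl

theorem r₂_subset_P : {r₂} ⊆ P := Set.singleton_subset_iff.2 (Or.inr rfl)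

theorem neg_r₂ : ∀ r ∈ ({r₂} : Set (Rule ℕ)), r.neg = ∅ := by
  rintro r rfl
  rfl

theorem headSet_r₂ : headSet {r₂} = S := Set.image_singleton

theorem r₂_defeats : ∀ r ∈ P, r ∉ ({r₂} : Set (Rule ℕ)) → defeatsRule {r₂} r := by
  rintro r (rfl | rfl) hr
  · exact ⟨(true, 1), headSet_r₂ ▸ rfl, rfl⟩
  · exact absurd rfl hr

theorem answerSet : AnswerSet P S :=
  ⟨consistent_singleton _, {r₂},
    genSet_of_undefeated r₂_subset_P neg_r₂ r₂_defeats pos_eq_empty, headSet_r₂⟩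

theorem gPrefAnswerSet : GPrefAnswerSet lt P S :=
  ⟨consistent_singleton _, 𝒫 {r₂},
    prefStableFragSet_powerset_of_undefeated r₂_subset_P neg_r₂ r₂_defeats pos_eq_empty lt,
    by rw [sUnion_powerset_eq, headSet_r₂]⟩

theorem not_GNOPrefAnswerSet : ¬ GNOPrefAnswerSet lt P S := by
  rintro ⟨-, R, hR, hRS⟩
  have hr₁ : r₁ ∉ R := fun h => by
    have : r₁.head ∈ S := hRS ▸ Set.mem_image_of_mem _ h
    simp [r₁, S] at this
  have hlt : ∀ p ∈ R, lt p r₁ := fun p hp => by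
    rcases hR.1.1 hp with rfl | rfl
    · exact absurd hp hr₁
    · exact ⟨rfl, rfl⟩
  exact hr₁ (mem_of_GNOPrefGen hR pos_eq_empty (Or.inl rfl) hlt)

end GNOCounterexample

open GNOCounterexample in
/-- G is not included in GNO: some program with preferences has an
answer set that is G-preferred but not GNO-preferred. -/
theorem g_not_subset_gno :
    ∃ (P : Set (Rule ℕ)) (lt : Rule ℕ → Rule ℕ → Prop) (S : Set (Lit ℕ)),
      P.Finite ∧ Transitive lt ∧ (∀ r₁ r₂, lt r₁ r₂ → ¬ lt r₂ r₁) ∧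
      AnswerSet P S ∧ GPrefAnswerSet lt P S ∧ ¬ GNOPrefAnswerSet lt P S :=
  ⟨P, lt, S, P_finite, lt_transitive, lt_asymm, answerSet, gPrefAnswerSet,
    not_GNOPrefAnswerSet⟩
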